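/- arXiv:2202.04116 — 2 statements merged into one kernel-verified Lean document; each statement's English description precedes it below -/
import Mathlib

section
/- Let n ≥ 1 and let a_0, a_1, …, a_{n−1} be real numbers. The n×n L-matrix A_n with entries (A_n)_{i,j} = a_{max(i,j)} is positive definite if and only if a_0 > a_1 > … > a_{n−1} > 0. -/
/-!
Write `L` for the lower-triangular matrix of ones and extend `a` by `a n = 0`. Since
`a (max i j) = ∑_{k ≥ max i j} (a k - a (k + 1))` telescopes, the L-matrix factors as
`Lᵀ * diagonal (a k - a (k + 1)) * L`. As `L` is invertible, this congruence preserves positive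
definiteness both ways, and a diagonal matrix is positive definite iff its entries are positive.
-/

open Finset

namespace Matrix

variable {R : Type*}

def lMatrix (n : ℕ) (a : ℕ → R) : Matrix (Fin n) (Fin n) R :=
  of fun i j => a (max (i : ℕ) j)

def lowerTriangularOnes [Zero R] [One R] (n : ℕ) : Matrix (Fin n) (Fin n) R :=
  of fun k i => if i ≤ k then 1 else 0

theorem lMatrix_congr {n : ℕ} {a b : ℕ → R} (h : ∀ k < n, a k = b k) :
    lMatrix n a = lMatrix n b := by
  ext i j
  exact h _ (max_lt i.2 j.2)

theorem isUnit_lowerTriangularOnes [CommRing R] (n : ℕ) :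
    IsUnit (lowerTriangularOnes n : Matrix (Fin n) (Fin n) R) := by
  rw [isUnit_iff_isUnit_det, det_of_isLowerTriangular (lowerTriangularOnes n)
    fun k i hki => if_neg (not_le.mpr hki)]
  simp [lowerTriangularOnes]

theorem lMatrix_eq_transpose_mul_diagonal_mul [CommRing R] {n : ℕ} (b : ℕ → R)
    (hb : b n = 0) :
    lMatrix n b = (lowerTriangularOnes n)ᵀ * diagonal (fun k : Fin n => b k - b (k + 1)) *
      lowerTriangularOnes n := by
  ext i j
  have hmax : max (i : ℕ) j ≤ n := max_le i.2.le j.2.le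
  calc lMatrix n b i j = -(b n - b (max (i : ℕ) j)) := by simp [lMatrix, hb]
    _ = ∑ k ∈ Ico (max (i : ℕ) j) n, (b k - b (k + 1)) := by
      rw [← sum_Ico_sub b hmax, ← sum_neg_distrib]
      simp
    _ = ∑ k ∈ range n, if max (i : ℕ) j ≤ k then b k - b (k + 1) else 0 := by
      rw [sum_ite, sum_const_zero, add_zero]
      congr 1
      ext k
      simp [and_comm]
    _ = ∑ k : Fin n, if max (i : ℕ) j ≤ k then b k - b (k + 1) else 0 :=
      (Fin.sum_univ_eq_sum_range
        (fun k => if max (i : ℕ) j ≤ k then b k - b (k + 1) else 0) n).symm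
    _ = ((lowerTriangularOnes n)ᵀ * diagonal (fun k : Fin n => b k - b (k + 1)) *
          lowerTriangularOnes n : Matrix (Fin n) (Fin n) R) i j := by
      rw [mul_apply]
      refine sum_congr rfl fun k _ => ?_
      simp only [mul_diagonal, transpose_apply, lowerTriangularOnes, of_apply, max_le_iff,
        Fin.le_def]
      split_ifs <;> simp_all

theorem posDef_lMatrix_iff [CommRing R] [PartialOrder R] [StarRing R] [StarOrderedRing R]
    [TrivialStar R] [NoZeroDivisors R] [Nontrivial R] {n : ℕ} (b : ℕ → R) (hb : b n = 0) :
    (lMatrix n b).PosDef ↔ ∀ k < n, b (k + 1) < b k := by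
  rw [lMatrix_eq_transpose_mul_diagonal_mul b hb, ← conjTranspose_eq_transpose_of_trivial,
    ← star_eq_conjTranspose,
    IsUnit.posDef_star_left_conjugate_iff (isUnit_lowerTriangularOnes n), posDef_diagonal_iff,
    Fin.forall_iff]
  simp only [sub_pos]

end Matrix

/-- For `n ≥ 1` and real numbers `a_0, …, a_{n−1}`, the L-matrix with entries
`(A_n)_{i,j} = a_{max(i,j)}` is positive definite iff `a_0 > a_1 > … > a_{n−1} > 0`. -/
theorem L_matrix_posDef_iff (n : ℕ) (hn : 1 ≤ n) (a : ℕ → ℝ) :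
    (Matrix.of fun i j : Fin n => a (max (i : ℕ) (j : ℕ))).PosDef ↔
      ((∀ j : ℕ, j < n - 1 → a (j + 1) < a j) ∧ 0 < a (n - 1)) := by
  obtain ⟨m, rfl⟩ : ∃ m, n = m + 1 := ⟨n - 1, by omega⟩
  set b : ℕ → ℝ := fun k => if k < m + 1 then a k else 0
  have hab : ∀ k < m + 1, a k = b k := fun k hk => (if_pos hk).symm
  have hb : b (m + 1) = 0 := if_neg (lt_irrefl _)
  change (Matrix.lMatrix (m + 1) a).PosDef ↔ _
  rw [Matrix.lMatrix_congr hab, Matrix.posDef_lMatrix_iff b hb, Nat.forall_lt_succ_right,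
    Nat.add_sub_cancel, ← hab m m.lt_succ_self, hb]
  refine and_congr_left' (forall₂_congr fun k hk => ?_)
  rw [← hab k (by omega), ← hab (k + 1) (by omega)]
end

section
/- Let ν > 0 and n ≥ 2. Let B_m(ν) be the m×m symmetric tridiagonal Jacobi matrix built from b_j := (j+ν)(j+1+ν), i.e., with diagonal entries (B_m(ν))_{0,0} = b_0, (B_m(ν))_{j,j} = b_{j−1}+b_j for 1 ≤ j ≤ m−1, and off-diagonal entries (B_m(ν))_{j,j+1} = (B_m(ν))_{j+1,j} = −b_j for 0 ≤ j ≤ m−2, and denote its eigenvalues in nondecreasing order by β_{1,m}(ν) ≤ … ≤ β_{m,m}(ν). Then all β_{k,m}(ν) are positive, and for every j ∈ {1,…,n−1}, 1/β_{n−j+1,n}(ν) ≤ μ_{j,n}(ν) ≤ 1/β_{n−j,n−1}(ν). -/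
open Filter Matrix

/-- The generalized Hilbert L-matrix `L_n(ν)` with entries `1/(max(i,j)+ν)`. -/
noncomputable def Lmat (ν : ℝ) (n : ℕ) : Matrix (Fin n) (Fin n) ℝ :=
  Matrix.of fun i j => 1 / ((max (i : ℕ) (j : ℕ) : ℝ) + ν)

theorem Lmat_isHermitian (ν : ℝ) (n : ℕ) : (Lmat ν n).IsHermitian := by
  unfold Matrix.IsHermitian
  ext i j
  simp [Lmat, Matrix.conjTranspose_apply, max_comm]

/-- The eigenvalues of `L_n(ν)` listed (with multiplicity) in nondecreasing order,
indexed by `Fin n` (so `evals ν n ⟨j-1,_⟩ = μ_{j,n}(ν)`). -/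
noncomputable def evals (ν : ℝ) (n : ℕ) : Fin n → ℝ :=
  fun j => (Lmat_isHermitian ν n).eigenvalues (Tuple.sort ((Lmat_isHermitian ν n).eigenvalues) j)

/-- `muL ν n j = μ_{j+1,n}(ν)`, the `(j+1)`-th smallest eigenvalue (0-based index `j`),
with junk value `0` when `j ≥ n`. -/
noncomputable def muL (ν : ℝ) (n : ℕ) (j : ℕ) : ℝ :=
  if h : j < n then evals ν n ⟨j, h⟩ else 0


/-- The `m×m` symmetric tridiagonal Jacobi matrix with diagonal
`(b_0, b_0+b_1, …, b_{m−2}+b_{m−1})` and sub/superdiagonal entries `−b_0, …, −b_{m−2}`. -/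
noncomputable def jacobiMat (b : ℕ → ℝ) (m : ℕ) : Matrix (Fin m) (Fin m) ℝ :=
  Matrix.of fun i j =>
    if (i : ℕ) = (j : ℕ) then
      (if (i : ℕ) = 0 then b 0 else b ((i : ℕ) - 1) + b (i : ℕ))
    else if (i : ℕ) + 1 = (j : ℕ) ∨ (j : ℕ) + 1 = (i : ℕ) then
      -(b (min (i : ℕ) (j : ℕ)))
    else 0

theorem jacobiMat_isHermitian (b : ℕ → ℝ) (m : ℕ) : (jacobiMat b m).IsHermitian := by
  unfold Matrix.IsHermitian
  ext i j
  simp only [jacobiMat, Matrix.conjTranspose_apply, Matrix.of_apply, star_trivial]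
  by_cases h : (i : ℕ) = (j : ℕ)
  · simp [h]
  · simp [h, Ne.symm h, or_comm, min_comm]

/-- Sorted (nondecreasing) eigenvalue listing of the Jacobi matrix `B_m(ν)` built from
`b_j = (j+ν)(j+1+ν)`; `betaL ν m k = β_{k+1,m}(ν)` (0-based `k`), junk `0` if `k ≥ m`. -/
noncomputable def betaL (ν : ℝ) (m : ℕ) (k : ℕ) : ℝ :=
  if h : k < m then
    (jacobiMat_isHermitian (fun j => ((j : ℝ) + ν) * ((j : ℝ) + 1 + ν)) m).eigenvalues
      (Tuple.sort
        ((jacobiMat_isHermitian (fun j => ((j : ℝ) + ν) * ((j : ℝ) + 1 + ν)) m).eigenvalues)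
        ⟨k, h⟩)
  else 0

/-!
The inverse of `L_n(ν)` is the Jacobi matrix `T` of the weights `b_0, …, b_{n-2}, n-1+ν`: with
`A` the bidiagonal difference matrix, `A L Aᵀ` is diagonal because `L_{ij}` depends only on
`max i j`, while every Jacobi matrix factors as `Aᵀ diag(b) A`. The same factorization makes
Jacobi matrices with positive weights positive definite and gives `T ≤ B_n` in the Loewner order,
since `n-1+ν ≤ b_{n-1}`; and `B_{n-1}` is the leading principal submatrix of `T`. By
Courant–Fischer, the `k`-th eigenvalue of `T` is at most `β_{k,n}` (monotonicity) and at least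
`β_{k-1,n-1}` (Cauchy interlacing), and it equals `1/μ_{n+1-k,n}`.
-/

open Module Submodule
open scoped MatrixOrder

lemma Matrix.mulVec_dotProduct_mulVec_mulVec {R m n : Type*} [CommSemiring R] [Fintype m]
    [Fintype n] (C : Matrix n m R) (M : Matrix n n R) (x : m → R) :
    (C *ᵥ x) ⬝ᵥ (M *ᵥ (C *ᵥ x)) = x ⬝ᵥ ((Cᵀ * M * C) *ᵥ x) := by
  rw [← mulVec_mulVec, ← mulVec_mulVec, dotProduct_mulVec x, vecMul_transpose]

section Eigenbasis

variable {ι : Type*} [Fintype ι] {M : Matrix ι ι ℝ}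
  (u : OrthonormalBasis ι ℝ (EuclideanSpace ℝ ι)) {d : ι → ℝ}

lemma OrthonormalBasis.dotProduct_apply_eq_repr (x : EuclideanSpace ℝ ι) (i : ι) :
    x ⬝ᵥ ⇑(u i) = u.repr x i := by
  rw [u.repr_apply_apply, EuclideanSpace.inner_eq_star_dotProduct, star_trivial]

lemma OrthonormalBasis.repr_eq_zero_of_mem_span {t : Finset ι}
    {x : EuclideanSpace ℝ ι} (hx : x ∈ span ℝ (u '' t)) {i : ι} (hi : i ∉ t) :
    u.repr x i = 0 := by
  rw [← u.coe_toBasis, Basis.mem_span_image] at hx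
  by_contra h
  exact hi (hx (by simpa [u.coe_toBasis_repr_apply] using h))

lemma OrthonormalBasis.finrank_span_image (t : Finset ι) :
    finrank ℝ (span ℝ (u '' t)) = t.card := by
  rw [Set.image_eq_range]
  exact (finrank_span_eq_card
    (u.orthonormal.comp _ Subtype.val_injective).linearIndependent).trans (by simp)

lemma dotProduct_mulVec_eq_sum_mul_repr_sq (hu : ∀ i, M *ᵥ ⇑(u i) = d i • ⇑(u i))
    (x : EuclideanSpace ℝ ι) : x ⬝ᵥ (M *ᵥ x) = ∑ i, d i * u.repr x i ^ 2 := by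
  have hMx : M *ᵥ x = ∑ i, (u.repr x i * d i) • ⇑(u i) := by
    conv_lhs => rw [← u.sum_repr x]
    simp [mulVec_sum, mulVec_smul, hu, smul_smul]
  rw [hMx, dotProduct_sum]
  refine Finset.sum_congr rfl fun i _ => ?_
  rw [dotProduct_smul, u.dotProduct_apply_eq_repr, smul_eq_mul]
  ring

variable [DecidableEq ι]

lemma dotProduct_mulVec_le_of_mem_span (hu : ∀ i, M *ᵥ ⇑(u i) = d i • ⇑(u i))
    {t : Finset ι} {c : ℝ} (hd : ∀ i ∈ t, d i ≤ c) {x : EuclideanSpace ℝ ι}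
    (hx : x ∈ span ℝ (u '' t)) : x ⬝ᵥ (M *ᵥ x) ≤ c * (x ⬝ᵥ x) := by
  have hxx := dotProduct_mulVec_eq_sum_mul_repr_sq u (M := 1) (d := 1) (by simp) x
  rw [one_mulVec] at hxx
  rw [dotProduct_mulVec_eq_sum_mul_repr_sq u hu, hxx, Finset.mul_sum]
  refine Finset.sum_le_sum fun i _ => ?_
  by_cases hi : i ∈ t
  · simpa using mul_le_mul_of_nonneg_right (hd i hi) (sq_nonneg (u.repr x i))
  · simp [u.repr_eq_zero_of_mem_span hx hi]

lemma le_dotProduct_mulVec_of_mem_span (hu : ∀ i, M *ᵥ ⇑(u i) = d i • ⇑(u i))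
    {t : Finset ι} {c : ℝ} (hd : ∀ i ∈ t, c ≤ d i) {x : EuclideanSpace ℝ ι}
    (hx : x ∈ span ℝ (u '' t)) : c * (x ⬝ᵥ x) ≤ x ⬝ᵥ (M *ᵥ x) := by
  have := dotProduct_mulVec_le_of_mem_span u (M := -M) (d := -d) (c := -c)
    (fun i => by simp [neg_mulVec, hu]) (fun i hi => neg_le_neg (hd i hi)) hx
  simpa [neg_mulVec] using this

end Eigenbasis

section SortedEigenbasis

variable {N : ℕ} {M : Matrix (Fin N) (Fin N) ℝ}
  {u : OrthonormalBasis (Fin N) ℝ (EuclideanSpace ℝ (Fin N))} {d : Fin N → ℝ}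

lemma exists_finrank_eq_forall_dotProduct_mulVec_le (hu : ∀ i, M *ᵥ ⇑(u i) = d i • ⇑(u i))
    {σ : Equiv.Perm (Fin N)} (hσ : Monotone (d ∘ σ)) (k : Fin N) :
    ∃ S : Submodule ℝ (EuclideanSpace ℝ (Fin N)), finrank ℝ S = k + 1 ∧
      ∀ x ∈ S, x ⬝ᵥ (M *ᵥ x) ≤ d (σ k) * (x ⬝ᵥ x) := by
  refine ⟨span ℝ (u '' ((Finset.Iic k).map σ.toEmbedding)), ?_, fun x hx => ?_⟩
  · rw [u.finrank_span_image, Finset.card_map, Fin.card_Iic]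
  · refine dotProduct_mulVec_le_of_mem_span u hu (fun i hi => ?_) hx
    obtain ⟨l, hl, rfl⟩ := Finset.mem_map.mp hi
    exact hσ (Finset.mem_Iic.mp hl)

lemma exists_finrank_eq_forall_le_dotProduct_mulVec (hu : ∀ i, M *ᵥ ⇑(u i) = d i • ⇑(u i))
    {σ : Equiv.Perm (Fin N)} (hσ : Monotone (d ∘ σ)) (k : Fin N) :
    ∃ S : Submodule ℝ (EuclideanSpace ℝ (Fin N)), finrank ℝ S = N - k ∧
      ∀ x ∈ S, d (σ k) * (x ⬝ᵥ x) ≤ x ⬝ᵥ (M *ᵥ x) := by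
  refine ⟨span ℝ (u '' ((Finset.Ici k).map σ.toEmbedding)), ?_, fun x hx => ?_⟩
  · rw [u.finrank_span_image, Finset.card_map, Fin.card_Ici]
  · refine le_dotProduct_mulVec_of_mem_span u hu (fun i hi => ?_) hx
    obtain ⟨l, hl, rfl⟩ := Finset.mem_map.mp hi
    exact hσ (Finset.mem_Ici.mp hl)

end SortedEigenbasis

lemma le_of_finrank_add_finrank_gt {ι : Type*} [Fintype ι] {M : Matrix ι ι ℝ}
    {S T : Submodule ℝ (EuclideanSpace ℝ ι)}
    (hST : Fintype.card ι < finrank ℝ S + finrank ℝ T)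
    {c c' : ℝ} (hS : ∀ x ∈ S, x ⬝ᵥ (M *ᵥ x) ≤ c * (x ⬝ᵥ x))
    (hT : ∀ x ∈ T, c' * (x ⬝ᵥ x) ≤ x ⬝ᵥ (M *ᵥ x)) : c' ≤ c := by
  have hST' : ¬ Disjoint S T := fun h => by
    have := Submodule.finrank_add_finrank_le_of_disjoint h
    rw [finrank_euclideanSpace] at this
    omega
  obtain ⟨x, hxS, hxT, hx⟩ : ∃ x ∈ S, x ∈ T ∧ x ≠ 0 := by
    simpa [Submodule.disjoint_def] using hST'
  have hxx : 0 < x ⬝ᵥ x := by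
    rw [← star_trivial (x : ι → ℝ), ← EuclideanSpace.inner_eq_star_dotProduct]
    exact real_inner_self_pos.mpr hx
  exact le_of_mul_le_mul_right ((hT x hxT).trans (hS x hxS)) hxx

namespace Matrix.IsHermitian

variable {N : ℕ} {M : Matrix (Fin N) (Fin N) ℝ} (hM : M.IsHermitian)

noncomputable def sortedEigenvalues : Fin N → ℝ :=
  hM.eigenvalues ∘ Tuple.sort hM.eigenvalues

theorem sortedEigenvalues_eq_of_eigenbasis
    {u : OrthonormalBasis (Fin N) ℝ (EuclideanSpace ℝ (Fin N))} {d : Fin N → ℝ}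
    (hu : ∀ i, M *ᵥ ⇑(u i) = d i • ⇑(u i)) {σ : Equiv.Perm (Fin N)}
    (hσ : Monotone (d ∘ σ)) : hM.sortedEigenvalues = d ∘ σ := by
  have hsort : Monotone hM.sortedEigenvalues := Tuple.monotone_sort _
  funext k
  obtain ⟨S, hS, hSM⟩ := exists_finrank_eq_forall_dotProduct_mulVec_le hu hσ k
  obtain ⟨T, hT, hTM⟩ := exists_finrank_eq_forall_le_dotProduct_mulVec hu hσ k
  obtain ⟨S', hS', hS'M⟩ :=
    exists_finrank_eq_forall_dotProduct_mulVec_le hM.mulVec_eigenvectorBasis hsort k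
  obtain ⟨T', hT', hT'M⟩ :=
    exists_finrank_eq_forall_le_dotProduct_mulVec hM.mulVec_eigenvectorBasis hsort k
  have := k.isLt
  exact le_antisymm (le_of_finrank_add_finrank_gt (by rw [Fintype.card_fin]; omega) hSM hT'M)
    (le_of_finrank_add_finrank_gt (by rw [Fintype.card_fin]; omega) hS'M hTM)

theorem sortedEigenvalues_le_of_le_conj {m : ℕ} {A : Matrix (Fin m) (Fin m) ℝ}
    (hA : A.IsHermitian) {C : Matrix (Fin N) (Fin m) ℝ} (hC : Cᵀ * C = 1)
    (hAM : A ≤ Cᵀ * M * C) {k : Fin m} {j : Fin N} (hkj : (k : ℕ) + N ≤ j + m) :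
    hA.sortedEigenvalues k ≤ hM.sortedEigenvalues j := by
  obtain ⟨S, hS, hSA⟩ := exists_finrank_eq_forall_le_dotProduct_mulVec
    hA.mulVec_eigenvectorBasis (Tuple.monotone_sort _) k
  obtain ⟨T, hT, hTM⟩ := exists_finrank_eq_forall_dotProduct_mulVec_le
    hM.mulVec_eigenvectorBasis (Tuple.monotone_sort _) j
  have hCinj : Function.Injective (toEuclideanLin C) :=
    Function.LeftInverse.injective (g := toEuclideanLin Cᵀ) fun y => by
      ext
      simp [toLpLin_apply, mulVec_mulVec, hC]
  refine le_of_finrank_add_finrank_gt (S := T) (T := S.map (toEuclideanLin C)) ?_ hTM ?_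
  · rw [← (S.equivMapOfInjective _ hCinj).finrank_eq, Fintype.card_fin]
    omega
  · rintro _ ⟨y, hy, rfl⟩
    have hCy := mulVec_dotProduct_mulVec_mulVec C 1 y
    have hMy := (le_iff.mp hAM).dotProduct_mulVec_nonneg y
    rw [Matrix.mul_one, hC, one_mulVec, one_mulVec] at hCy
    rw [star_trivial, sub_mulVec, dotProduct_sub, sub_nonneg] at hMy
    simp only [toLpLin_apply, WithLp.ofLp_toLp]
    rw [hCy, mulVec_dotProduct_mulVec_mulVec]
    exact (hSA y hy).trans hMy

theorem sortedEigenvalues_mono {B : Matrix (Fin N) (Fin N) ℝ} (hB : B.IsHermitian) (hMB : M ≤ B)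
    (k : Fin N) : hM.sortedEigenvalues k ≤ hB.sortedEigenvalues k :=
  sortedEigenvalues_le_of_le_conj hB hM (C := 1) (by simp) (by simpa using hMB) le_rfl

theorem sortedEigenvalues_le_of_submatrix {m : ℕ} {A : Matrix (Fin m) (Fin m) ℝ}
    (hA : A.IsHermitian) (e : Fin m ↪ Fin N) (he : M.submatrix e e = A) {k : Fin m}
    {j : Fin N} (hkj : (k : ℕ) + N ≤ j + m) :
    hA.sortedEigenvalues k ≤ hM.sortedEigenvalues j := by
  set C := (1 : Matrix (Fin N) (Fin N) ℝ).submatrix (Equiv.refl _) e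
  have hC (X : Matrix (Fin N) (Fin N) ℝ) : Cᵀ * X * C = X.submatrix e e := by
    rw [transpose_submatrix, transpose_one, one_submatrix_mul, mul_submatrix_one]
    rfl
  refine sortedEigenvalues_le_of_le_conj hM hA ?_ (by rw [hC, he]) hkj
  rw [← Matrix.mul_one Cᵀ, hC, submatrix_one_embedding]

theorem sortedEigenvalues_rev_of_mul_eq_one {T : Matrix (Fin N) (Fin N) ℝ} (hT : T.IsHermitian)
    (hMpos : M.PosDef) (hMT : M * T = 1) (k : Fin N) :
    hT.sortedEigenvalues k.rev = (hMpos.isHermitian.sortedEigenvalues k)⁻¹ := by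
  have hu (i : Fin N) : T *ᵥ ⇑(hMpos.isHermitian.eigenvectorBasis i) =
      (hMpos.isHermitian.eigenvalues i)⁻¹ • ⇑(hMpos.isHermitian.eigenvectorBasis i) := by
    have := congr_arg (T *ᵥ ·) (hMpos.isHermitian.mulVec_eigenvectorBasis i)
    simp only [mulVec_mulVec, mul_eq_one_comm.mp hMT, one_mulVec, mulVec_smul] at this
    exact ((inv_smul_eq_iff₀ (hMpos.eigenvalues_pos i).ne').mpr this).symm
  have hσ : Monotone ((fun i => (hMpos.isHermitian.eigenvalues i)⁻¹) ∘
      (Tuple.sort hMpos.isHermitian.eigenvalues * (Fin.revPerm : Equiv.Perm (Fin N)))) := by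
    intro a b hab
    simp only [Function.comp_apply, Equiv.Perm.mul_apply, Fin.revPerm_apply]
    exact inv_anti₀ (hMpos.eigenvalues_pos _)
      (Tuple.monotone_sort hMpos.isHermitian.eigenvalues (Fin.rev_le_rev.mpr hab))
  rw [hT.sortedEigenvalues_eq_of_eigenbasis hu hσ]
  simp [sortedEigenvalues]

end Matrix.IsHermitian

def diffMatrix (m : ℕ) : Matrix (Fin m) (Fin m) ℝ :=
  of fun k j => (if (j : ℕ) = k then 1 else 0) - if (j : ℕ) = k + 1 then 1 else 0

lemma isUnit_diffMatrix (m : ℕ) : IsUnit (diffMatrix m) := by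
  have : (diffMatrix m).BlockTriangular id := fun i j (hij : (j : ℕ) < i) => by
    simp only [diffMatrix, of_apply]
    rw [if_neg (by omega), if_neg (by omega), sub_zero]
  rw [isUnit_iff_isUnit_det, det_of_isUpperTriangular this]
  simp [diffMatrix]

lemma diffMatrix_mul_apply {m : ℕ} (X : Matrix (Fin m) (Fin m) ℝ) (i j : Fin m) :
    (diffMatrix m * X) i j = X i j - if h : (i : ℕ) + 1 < m then X ⟨i + 1, h⟩ j else 0 := by
  simp only [mul_apply, diffMatrix, of_apply, sub_mul, ite_mul, one_mul, zero_mul,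
    Finset.sum_sub_distrib, Fin.val_inj, Finset.sum_ite_eq', Finset.mem_univ, if_true]
  congr 1
  split_ifs with h
  · rw [Finset.sum_eq_single ⟨i + 1, h⟩ (fun k _ hk => if_neg fun hki => hk (Fin.ext hki))
      (by simp), if_pos rfl]
  · exact Finset.sum_eq_zero fun k _ => if_neg (by omega)

lemma transpose_diffMatrix_mul_apply {m : ℕ} (X : Matrix (Fin m) (Fin m) ℝ) (i j : Fin m) :
    ((diffMatrix m)ᵀ * X) i j =
      X i j - if h : 0 < (i : ℕ) then X ⟨i - 1, by omega⟩ j else 0 := by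
  simp only [mul_apply, transpose_apply, diffMatrix, of_apply, sub_mul, ite_mul, one_mul,
    zero_mul, Finset.sum_sub_distrib, Fin.val_inj, Finset.sum_ite_eq, Finset.mem_univ, if_true]
  congr 1
  split_ifs with h
  · rw [Finset.sum_eq_single ⟨i - 1, by omega⟩
      (fun k _ hk => if_neg fun hki => hk (Fin.ext (by dsimp only; omega))) (by simp),
      if_pos (by dsimp only; omega)]
  · exact Finset.sum_eq_zero fun k _ => if_neg (by omega)

theorem jacobiMat_eq_transpose_mul_diagonal_mul (b : ℕ → ℝ) (m : ℕ) :
    jacobiMat b m = (diffMatrix m)ᵀ * diagonal (fun k : Fin m => b k) * diffMatrix m := by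
  rw [Matrix.mul_assoc]
  ext ⟨i, hi⟩ ⟨j, hj⟩
  rw [transpose_diffMatrix_mul_apply]
  simp only [diagonal_mul, diffMatrix, jacobiMat, of_apply]
  split_ifs <;> first | (exfalso; omega) | (subst_vars; simp [add_comm])

section Jacobi

variable {b c : ℕ → ℝ} {m : ℕ}

theorem jacobiMat_posDef (hb : ∀ k < m, 0 < b k) : (jacobiMat b m).PosDef := by
  rw [jacobiMat_eq_transpose_mul_diagonal_mul]
  simpa using (PosDef.diagonal fun k : Fin m => hb k k.2).conjTranspose_mul_mul_same
    (mulVec_injective_of_isUnit (isUnit_diffMatrix m))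

theorem jacobiMat_mono (hbc : ∀ k < m, b k ≤ c k) : jacobiMat b m ≤ jacobiMat c m := by
  rw [le_iff, jacobiMat_eq_transpose_mul_diagonal_mul, jacobiMat_eq_transpose_mul_diagonal_mul,
    ← sub_mul, ← mul_sub, diagonal_sub]
  simpa using (PosSemidef.diagonal fun k : Fin m =>
    sub_nonneg.mpr (hbc k k.2)).conjTranspose_mul_mul_same (diffMatrix m)

theorem jacobiMat_congr (hbc : ∀ k < m, b k = c k) : jacobiMat b m = jacobiMat c m := by
  ext i j
  simp only [jacobiMat, of_apply]
  split_ifs <;> simp (disch := omega) only [hbc]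

theorem jacobiMat_submatrix_castLE {N : ℕ} (h : m ≤ N) :
    (jacobiMat b N).submatrix (Fin.castLE h) (Fin.castLE h) = jacobiMat b m := by
  ext i j
  simp [jacobiMat]

end Jacobi

theorem diffMatrix_mul_of_max_mul_transpose (f : ℕ → ℝ) (m : ℕ) :
    diffMatrix m * of (fun i j : Fin m => f (max i j)) * (diffMatrix m)ᵀ =
      diagonal fun k : Fin m => f k - if (k : ℕ) + 1 < m then f (k + 1) else 0 := by
  have hF : (of fun i j : Fin m => f (max i j))ᵀ = of fun i j : Fin m => f (max i j) := by
    ext i j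
    simp [max_comm]
  rw [Matrix.mul_assoc, ← hF, ← transpose_mul]
  ext ⟨i, hi⟩ ⟨j, hj⟩
  simp only [diffMatrix_mul_apply, transpose_apply, of_apply, diagonal_apply, Fin.mk.injEq]
  rcases lt_trichotomy i j with h | rfl | h
  · simp only [max_eq_left h.le, max_eq_left (by omega : i ≤ j + 1),
      max_eq_left (by omega : i + 1 ≤ j), max_eq_left (by omega : i + 1 ≤ j + 1),
      if_neg h.ne, dif_pos (by omega : i + 1 < m)]
    split_ifs <;> ring
  · simp only [max_self, max_eq_left (Nat.le_succ i), max_eq_right (Nat.le_succ i), if_true]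
    split_ifs <;> ring
  · simp only [max_eq_right h.le, max_eq_right (by omega : j + 1 ≤ i),
      max_eq_right (by omega : j ≤ i + 1), max_eq_right (by omega : j + 1 ≤ i + 1),
      if_neg h.ne', dif_pos (by omega : j + 1 < m)]
    split_ifs <;> ring

theorem of_max_mul_jacobiMat_eq_one {f d : ℕ → ℝ} {m : ℕ}
    (hfd : ∀ k < m, d k * (f k - if k + 1 < m then f (k + 1) else 0) = 1) :
    of (fun i j : Fin m => f (max i j)) * jacobiMat d m = 1 := by
  refine (isUnit_diffMatrix m).mul_left_cancel ?_
  have hGD : (diagonal fun k : Fin m => f k - if (k : ℕ) + 1 < m then f (k + 1) else 0) *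
      diagonal (fun k : Fin m => d k) = 1 := by
    rw [diagonal_mul_diagonal, ← diagonal_one]
    exact congr_arg diagonal (funext fun k => by rw [mul_comm, hfd k k.2])
  rw [jacobiMat_eq_transpose_mul_diagonal_mul, Matrix.mul_one]
  calc diffMatrix m * (of (fun i j : Fin m => f (max i j)) *
        ((diffMatrix m)ᵀ * diagonal (fun k : Fin m => d k) * diffMatrix m))
      = diffMatrix m * of (fun i j : Fin m => f (max i j)) * (diffMatrix m)ᵀ *
          diagonal (fun k : Fin m => d k) * diffMatrix m := by
        simp only [Matrix.mul_assoc]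
    _ = diffMatrix m := by
        rw [diffMatrix_mul_of_max_mul_transpose, hGD, Matrix.one_mul]

noncomputable def LmatInvWeight (ν : ℝ) (n k : ℕ) : ℝ :=
  if k + 1 < n then (k + ν) * (k + 1 + ν) else k + ν

theorem Lmat_mul_jacobiMat_LmatInvWeight {ν : ℝ} (hν : 0 < ν) (n : ℕ) :
    Lmat ν n * jacobiMat (LmatInvWeight ν n) n = 1 := by
  have hL : Lmat ν n = of fun i j : Fin n => (fun k : ℕ => 1 / ((k : ℝ) + ν)) (max i j) := by
    ext
    simp [Lmat]
  rw [hL]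
  refine of_max_mul_jacobiMat_eq_one (f := fun k : ℕ => 1 / ((k : ℝ) + ν)) fun k _ => ?_
  have : (0 : ℝ) < k + ν := by positivity
  unfold LmatInvWeight
  split_ifs
  · push_cast
    field_simp
    ring
  · simp [this.ne']

theorem Lmat_posDef {ν : ℝ} (hν : 0 < ν) (n : ℕ) : (Lmat ν n).PosDef := by
  rw [← inv_eq_left_inv (Lmat_mul_jacobiMat_LmatInvWeight hν n)]
  refine (jacobiMat_posDef fun k _ => ?_).inv
  unfold LmatInvWeight
  split_ifs <;> positivity

theorem LmatInvWeight_le {ν : ℝ} (hν : 0 ≤ ν) (n k : ℕ) :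
    LmatInvWeight ν n k ≤ ((k : ℝ) + ν) * ((k : ℝ) + 1 + ν) := by
  unfold LmatInvWeight
  split_ifs
  · rfl
  · nlinarith [(k.cast_nonneg : (0 : ℝ) ≤ k)]

theorem jacobiMat_LmatInvWeight_submatrix (ν : ℝ) (n : ℕ) :
    (jacobiMat (LmatInvWeight ν n) n).submatrix (Fin.castLE (n.sub_le 1)) (Fin.castLE (n.sub_le 1))
      = jacobiMat (fun j => ((j : ℝ) + ν) * ((j : ℝ) + 1 + ν)) (n - 1) := by
  rw [jacobiMat_submatrix_castLE]
  exact jacobiMat_congr fun k hk => if_pos (by omega)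

theorem betaL_eq_sortedEigenvalues {ν : ℝ} {m k : ℕ} (hk : k < m) :
    betaL ν m k = (jacobiMat_isHermitian (fun j => ((j : ℝ) + ν) * ((j : ℝ) + 1 + ν)) m
      ).sortedEigenvalues ⟨k, hk⟩ := by
  rw [betaL, dif_pos hk]
  rfl

theorem betaL_pos {ν : ℝ} (hν : 0 < ν) {m k : ℕ} (hk : k < m) : 0 < betaL ν m k := by
  rw [betaL_eq_sortedEigenvalues hk]
  exact (jacobiMat_posDef fun k _ => by positivity).eigenvalues_pos _

theorem muL_eq_sortedEigenvalues {ν : ℝ} {n j : ℕ} (hj : j < n) :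
    muL ν n j = (Lmat_isHermitian ν n).sortedEigenvalues ⟨j, hj⟩ := by
  rw [muL, dif_pos hj]
  rfl

theorem muL_pos {ν : ℝ} (hν : 0 < ν) {n j : ℕ} (hj : j < n) : 0 < muL ν n j := by
  rw [muL_eq_sortedEigenvalues hj]
  exact (Lmat_posDef hν n).eigenvalues_pos _

theorem inv_muL_sub_one_eq_sortedEigenvalues {ν : ℝ} (hν : 0 < ν) {n j : ℕ} (hj : 1 ≤ j)
    (hjn : j ≤ n) :
    (muL ν n (j - 1))⁻¹ =
      (jacobiMat_isHermitian (LmatInvWeight ν n) n).sortedEigenvalues ⟨n - j, by omega⟩ := by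
  rw [muL_eq_sortedEigenvalues (by omega),
    ← (jacobiMat_isHermitian _ n).sortedEigenvalues_rev_of_mul_eq_one (Lmat_posDef hν n)
      (Lmat_mul_jacobiMat_LmatInvWeight hν n)]
  congr
  ext
  simp only [Fin.val_rev]
  omega

theorem hilbert_L_matrix_jacobi_eigenvalue_bounds_general (ν : ℝ) (hν : 0 < ν) (n : ℕ) :
    (∀ m k : ℕ, k < m → 0 < betaL ν m k) ∧
      (∀ j : ℕ, 1 ≤ j → j ≤ n - 1 →
        1 / betaL ν n (n - j) ≤ muL ν n (j - 1) ∧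
          muL ν n (j - 1) ≤ 1 / betaL ν (n - 1) (n - j - 1)) := by
  refine ⟨fun m k => betaL_pos hν, fun j hj hjn => ?_⟩
  have hT := jacobiMat_isHermitian (LmatInvWeight ν n) n
  have hlow : hT.sortedEigenvalues ⟨n - j, by omega⟩ ≤ betaL ν n (n - j) := by
    rw [betaL_eq_sortedEigenvalues (by omega)]
    exact hT.sortedEigenvalues_mono _ (jacobiMat_mono fun k _ => LmatInvWeight_le hν.le n k) _
  have hup : betaL ν (n - 1) (n - j - 1) ≤ hT.sortedEigenvalues ⟨n - j, by omega⟩ := by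
    rw [betaL_eq_sortedEigenvalues (by omega)]
    exact hT.sortedEigenvalues_le_of_submatrix _ (Fin.castLEEmb (n.sub_le 1))
      (jacobiMat_LmatInvWeight_submatrix ν n) (by dsimp only; omega)
  rw [one_div_le (betaL_pos hν (by omega)) (muL_pos hν (by omega)),
    le_one_div (muL_pos hν (by omega)) (betaL_pos hν (by omega)), one_div,
    inv_muL_sub_one_eq_sortedEigenvalues hν hj (by omega)]
  exact ⟨hlow, hup⟩

/-- For `ν > 0` and `n ≥ 2`, with `B_m(ν)` the Jacobi matrix built from
`b_j = (j+ν)(j+1+ν)` and `β_{1,m}(ν) ≤ … ≤ β_{m,m}(ν)` its eigenvalues, all eigenvalues of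
`B_m(ν)` are positive and for every `j ∈ {1,…,n−1}`:
`1/β_{n−j+1,n}(ν) ≤ μ_{j,n}(ν) ≤ 1/β_{n−j,n−1}(ν)`. -/
theorem hilbert_L_matrix_jacobi_eigenvalue_bounds (ν : ℝ) (hν : 0 < ν) (n : ℕ) (hn : 2 ≤ n) :
    (∀ m k : ℕ, k < m → 0 < betaL ν m k) ∧
      (∀ j : ℕ, 1 ≤ j → j ≤ n - 1 →
        1 / betaL ν n (n - j) ≤ muL ν n (j - 1) ∧
          muL ν n (j - 1) ≤ 1 / betaL ν (n - 1) (n - j - 1)) :=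
  hilbert_L_matrix_jacobi_eigenvalue_bounds_general ν hν n
end
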